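/- arXiv:2405.12657 — 2 statements merged into one kernel-verified Lean document; each statement's English description precedes it below -/
import Mathlib

section
/- Let N ∈ ℕ, let γ : [0,1] → ℝ^N be continuous, and let τ : [0,1] → ℂ be continuous with Z_N(τ(r); γ(r)) = 0 for all r ∈ [0,1] and with τ(0) real. If there exists r₁ ∈ [0,1] with τ(r₁) not real, then there exists r* ∈ [0, r₁) such that τ(r*) is real and, for every ε > 0, there exists r with r* < r ≤ r₁, r − r* < ε, |τ(r) − τ(r*)| < ε, τ(r) ≠ conj(τ(r)), and both τ(r) and conj(τ(r)) are zeros of Z_N(·; γ(r)). In other words, along a continuous family the zero τ can leave the real axis only by splitting into a pair of distinct complex-conjugate zeros that emerge from a real collision point τ(r*). -/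
open Complex Real

/-- Complex extension of the Riemann–Siegel theta function. -/
noncomputable def RSTheta (s : ℂ) : ℂ :=
  (-Complex.I / 2) *
    (Complex.log (Complex.Gamma (1 / 4 + Complex.I * s / 2)) -
      Complex.log (Complex.Gamma (1 / 4 - Complex.I * s / 2))) -
    s / 2 * Real.log Real.pi

/-- Generalized section of the Hardy Z-function with parameters `a ∈ ℝ^N`. -/
noncomputable def ZSection (N : ℕ) (a : Fin N → ℝ) (s : ℂ) : ℂ :=
  Complex.cos (RSTheta s) +
    ∑ k : Fin N, ((a k : ℂ) / Real.sqrt ((k : ℕ) + 2)) *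
      Complex.cos (RSTheta s - (Real.log ((k : ℕ) + 2) : ℂ) * s)

/-- The Riemann Hypothesis: every zero of ζ lies on the critical line or is a
trivial zero `s = -2m` for a positive integer `m`. -/
def RH : Prop :=
  ∀ s : ℂ, riemannZeta s = 0 → s.re = 1 / 2 ∨ ∃ m : ℕ, 0 < m ∧ s = -2 * (m : ℂ)

/-!
Θ is real-symmetric up to the branch of `Log`: `Θ(s̄) = conj Θ(s) + nπ` for some integer `n`,
and shifting the phase of every cosine in `Z_N` by `nπ` only multiplies `Z_N` by `(-1)^n`.
Hence the zero set of `Z_N(·; a)` is invariant under conjugation. Along the path, let `r*` be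
the last time in `[0, r₁]` at which `τ` is real (a closed condition, so this supremum is attained);
every later time gives a non-real zero `τ(r)` together with its distinct conjugate, and continuity
at `r*` makes them close to `τ(r*)`.
-/

open Set Filter Topology ComplexConjugate

theorem exists_last_mem_of_continuousOn {X : Type*} [TopologicalSpace X] {f : ℝ → X}
    {C : Set X} {a b : ℝ} (hC : IsClosed C) (hab : a ≤ b) (hf : ContinuousOn f (Icc a b))
    (ha : f a ∈ C) (hb : f b ∉ C) :
    ∃ c ∈ Ico a b, f c ∈ C ∧ ∀ r ∈ Ioc c b, f r ∉ C := by
  set S := Icc a b ∩ f ⁻¹' C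
  have hS : IsClosed S := hf.preimage_isClosed_of_isClosed isClosed_Icc hC
  have hSbdd : BddAbove S := ⟨b, fun x hx => hx.1.2⟩
  obtain ⟨⟨hac, hcb⟩, hcC⟩ : sSup S ∈ S := hS.csSup_mem ⟨a, ⟨left_mem_Icc.2 hab, ha⟩⟩ hSbdd
  refine ⟨sSup S, ⟨hac, hcb.lt_of_ne ?_⟩, hcC, fun r hr hrC => ?_⟩
  · rintro hc
    exact hb (hc ▸ hcC)
  · exact (le_csSup hSbdd ⟨⟨hac.trans hr.1.le, hr.2⟩, hrC⟩).not_gt hr.1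

theorem exists_mem_Ioc_dist_lt_of_continuousWithinAt {X : Type*} [PseudoMetricSpace X]
    {f : ℝ → X} {c b ε : ℝ} (hcb : c < b) (hf : ContinuousWithinAt f (Ioc c b) c)
    (hε : 0 < ε) : ∃ r ∈ Ioc c b, r - c < ε ∧ dist (f r) (f c) < ε := by
  have := left_nhdsWithin_Ioc_neBot hcb
  have hclose : ∀ᶠ r in 𝓝[Ioc c b] c, r < c + ε :=
    nhdsWithin_le_nhds (eventually_lt_nhds (by linarith))
  obtain ⟨r, hr, hrc, hfr⟩ :=
    (eventually_mem_nhdsWithin.and (hclose.and (hf (Metric.ball_mem_nhds _ hε)))).exists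
  exact ⟨r, hr, by linarith, hfr⟩

namespace Complex

theorem exists_log_conj_eq (x : ℂ) :
    ∃ n : ℤ, log (conj x) = conj (log x) + n * (2 * π * I) := by
  rw [log_conj_eq_ite]
  split_ifs with h
  · refine ⟨1, Complex.ext (by simp) ?_⟩
    simp [log_im, h, two_mul]
  · exact ⟨0, by simp⟩

end Complex

theorem RSTheta_conj (s : ℂ) : ∃ n : ℤ, RSTheta (conj s) = conj (RSTheta s) + n * π := by
  have hconj : 1 / 4 + I * conj s / 2 = conj (1 / 4 - I * s / 2) ∧
      1 / 4 - I * conj s / 2 = conj (1 / 4 + I * s / 2) := by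
    simp only [map_add, map_sub, map_div₀, map_mul, conj_I, map_one, map_ofNat]
    constructor <;> ring
  obtain ⟨m, hm⟩ := exists_log_conj_eq (Gamma (1 / 4 - I * s / 2))
  obtain ⟨n, hn⟩ := exists_log_conj_eq (Gamma (1 / 4 + I * s / 2))
  refine ⟨m - n, ?_⟩
  rw [RSTheta, RSTheta, hconj.1, hconj.2, Gamma_conj, Gamma_conj, hm, hn]
  simp only [map_sub, map_mul, map_div₀, map_neg, conj_I, map_ofNat, conj_ofReal]
  push_cast
  linear_combination (-(m - n) * π : ℂ) * I_sq

/-- `ZSection N a s = ZSectionPhase N a s (RSTheta s)`, with the phase `Θ(s)` made free. -/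
noncomputable def ZSectionPhase (N : ℕ) (a : Fin N → ℝ) (w t : ℂ) : ℂ :=
  cos t + ∑ k : Fin N, ((a k : ℂ) / Real.sqrt ((k : ℕ) + 2)) *
    cos (t - (Real.log ((k : ℕ) + 2) : ℂ) * w)

theorem ZSectionPhase_antiperiodic (N : ℕ) (a : Fin N → ℝ) (w : ℂ) :
    Function.Antiperiodic (ZSectionPhase N a w) π := fun t => by
  simp only [ZSectionPhase, add_sub_right_comm t, Complex.cos_add_pi, mul_neg,
    Finset.sum_neg_distrib, neg_add]

theorem ZSectionPhase_conj (N : ℕ) (a : Fin N → ℝ) (w t : ℂ) :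
    ZSectionPhase N a (conj w) (conj t) = conj (ZSectionPhase N a w t) := by
  simp only [ZSectionPhase, map_add, map_sum, map_mul, map_div₀, conj_ofReal, ← cos_conj, map_sub]

theorem ZSection_conj_eq_zero {N : ℕ} {a : Fin N → ℝ} {s : ℂ} (h : ZSection N a s = 0) :
    ZSection N a (conj s) = 0 := by
  obtain ⟨n, hn⟩ := RSTheta_conj s
  change ZSectionPhase N a s (RSTheta s) = 0 at h
  change ZSectionPhase N a (conj s) (RSTheta (conj s)) = 0
  rw [hn, (ZSectionPhase_antiperiodic N a _).add_int_mul_eq, ZSectionPhase_conj, h, map_zero,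
    mul_zero]

theorem zero_leaves_real_axis_via_conjugate_pair_general
    (N : ℕ) (γ : ℝ → Fin N → ℝ) (τ : ℝ → ℂ)
    (hτ : ContinuousOn τ (Set.Icc 0 1))
    (hzero : ∀ r ∈ Set.Icc (0 : ℝ) 1, ZSection N (γ r) (τ r) = 0)
    (hreal : (τ 0).im = 0)
    (r₁ : ℝ) (hr₁ : r₁ ∈ Set.Icc (0 : ℝ) 1) (hnr : (τ r₁).im ≠ 0) :
    ∃ rs : ℝ, rs ∈ Set.Ico 0 r₁ ∧ (τ rs).im = 0 ∧
      ∀ ε > 0, ∃ r : ℝ, rs < r ∧ r ≤ r₁ ∧ r - rs < ε ∧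
        ‖τ r - τ rs‖ < ε ∧
        τ r ≠ (starRingEnd ℂ) (τ r) ∧
        ZSection N (γ r) (τ r) = 0 ∧
        ZSection N (γ r) ((starRingEnd ℂ) (τ r)) = 0 := by
  have hsub : Icc 0 r₁ ⊆ Icc (0 : ℝ) 1 := Icc_subset_Icc_right hr₁.2
  obtain ⟨rs, hrs, hrs_real, hlater⟩ := exists_last_mem_of_continuousOn
    (isClosed_eq continuous_im continuous_const) hr₁.1 (hτ.mono hsub) hreal hnr
  refine ⟨rs, hrs, hrs_real, fun ε hε => ?_⟩
  have hIoc : Ioc rs r₁ ⊆ Icc (0 : ℝ) 1 := fun r hr => hsub ⟨hrs.1.trans hr.1.le, hr.2⟩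
  have hcont : ContinuousWithinAt τ (Ioc rs r₁) rs :=
    (hτ rs (hsub (Ico_subset_Icc_self hrs))).mono hIoc
  obtain ⟨r, hr, hr_near, hτ_near⟩ :=
    exists_mem_Ioc_dist_lt_of_continuousWithinAt hrs.2 hcont hε
  have hzr := hzero r (hIoc hr)
  exact ⟨r, hr.1, hr.2, hr_near, dist_eq_norm (τ r) _ ▸ hτ_near,
    fun h => hlater r hr (conj_eq_iff_im.1 h.symm), hzr, ZSection_conj_eq_zero hzr⟩

/-- Along a continuous family of sections, a zero starting on the real line can leave
the real axis only by splitting into a pair of distinct complex-conjugate zeros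
emerging from a real collision point. -/
theorem zero_leaves_real_axis_via_conjugate_pair
    (N : ℕ) (γ : ℝ → Fin N → ℝ) (τ : ℝ → ℂ)
    (hγ : ContinuousOn γ (Set.Icc 0 1)) (hτ : ContinuousOn τ (Set.Icc 0 1))
    (hzero : ∀ r ∈ Set.Icc (0 : ℝ) 1, ZSection N (γ r) (τ r) = 0)
    (hreal : (τ 0).im = 0)
    (r₁ : ℝ) (hr₁ : r₁ ∈ Set.Icc (0 : ℝ) 1) (hnr : (τ r₁).im ≠ 0) :
    ∃ rs : ℝ, rs ∈ Set.Ico 0 r₁ ∧ (τ rs).im = 0 ∧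
      ∀ ε > 0, ∃ r : ℝ, rs < r ∧ r ≤ r₁ ∧ r - rs < ε ∧
        ‖τ r - τ rs‖ < ε ∧
        τ r ≠ (starRingEnd ℂ) (τ r) ∧
        ZSection N (γ r) (τ r) = 0 ∧
        ZSection N (γ r) ((starRingEnd ℂ) (τ r)) = 0 :=
  zero_leaves_real_axis_via_conjugate_pair_general N γ τ hτ hzero hreal r₁ hr₁ hnr
end

section
/- Let n ≥ 2 be an integer and let w > 0 be a real number satisfying w·e^w = (8n − 11)/(8e). Set t := (8n − 11)·π/(4w). Then (t/2)·log(t/(2π)) − t/2 − π/8 = (n − 3/2)·π; that is, the Franca–LeClair closed-form point t = (8n−11)π/(4·W_0((8n−11)/(8e))) solves the approximate Riemann–Siegel theta equation θ_approx(t) = (m + 1/2)π with θ_approx(t) = (t/2)log(t/(2π)) − t/2 − π/8 and m = n − 2. -/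
/-!
With `c = (8n − 11)/8`, the relation `w eʷ = c/e` says exactly that `t/(2π) = e^{w+1}` for
`t = 2πc/w`. Hence `log (t/(2π)) = w + 1`, and the left side collapses to
`(t/2)·w − π/8 = πc − π/8 = (n − 3/2)π`.
-/

open Real

lemma div_two_pi_eq_exp_of_mul_exp_eq {w x : ℝ} (hw : w ≠ 0)
    (hwe : w * exp w = x / (8 * exp 1)) :
    x * π / (4 * w) / (2 * π) = exp (w + 1) := by
  have hx : x = 8 * w * exp (w + 1) := by
    rw [exp_add, ← mul_assoc, mul_assoc 8, hwe]
    field_simp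
  rw [hx]
  field_simp
  ring

lemma half_mul_log_sub_half_of_div_eq_exp {t w : ℝ} (h : t / (2 * π) = exp (w + 1)) :
    t / 2 * log (t / (2 * π)) - t / 2 = t * w / 2 := by
  rw [h, log_exp]
  ring

theorem francaLeClair_solves_theta_equation_general
    (n : ℕ) (w : ℝ) (hw : 0 < w)
    (hwe : w * Real.exp w = (8 * (n : ℝ) - 11) / (8 * Real.exp 1))
    (t : ℝ) (ht : t = (8 * (n : ℝ) - 11) * Real.pi / (4 * w)) :
    t / 2 * Real.log (t / (2 * Real.pi)) - t / 2 - Real.pi / 8 =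
      ((n : ℝ) - 3 / 2) * Real.pi := by
  have hexp : t / (2 * π) = exp (w + 1) := ht ▸ div_two_pi_eq_exp_of_mul_exp_eq hw.ne' hwe
  rw [half_mul_log_sub_half_of_div_eq_exp hexp, ht]
  field_simp
  ring

/-- The Franca–LeClair closed-form point `t = (8n−11)π / (4·W₀((8n−11)/(8e)))`
solves the approximate theta equation
`(t/2)·log(t/(2π)) − t/2 − π/8 = (n − 3/2)·π`. -/
theorem francaLeClair_solves_theta_equation
    (n : ℕ) (hn : 2 ≤ n) (w : ℝ) (hw : 0 < w)
    (hwe : w * Real.exp w = (8 * (n : ℝ) - 11) / (8 * Real.exp 1))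
    (t : ℝ) (ht : t = (8 * (n : ℝ) - 11) * Real.pi / (4 * w)) :
    t / 2 * Real.log (t / (2 * Real.pi)) - t / 2 - Real.pi / 8 =
      ((n : ℝ) - 3 / 2) * Real.pi :=
  francaLeClair_solves_theta_equation_general n w hw hwe t ht
end
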